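/- (Decoding correctness, Algorithm 2.) Assume additionally that ∑_{t ∈ V} P(t | x) = 1 for every finite sequence x over V. Then for every natural number n, the intervals {I_s : s a sequence over V of length n} are pairwise disjoint and their union is [0, 1); consequently every z ∈ [0, 1) lies in the interval I_s of exactly one sequence s of length n. -/
import Mathlib


open Finset

/-- Cumulative probability `C_t(x) = ∑_{u : σ u < σ t} P(u | x)`. -/
noncomputable def cdf {V : Type*} [Fintype V] (P : List V → V → ℝ) (σ : V → ℕ)
    (x : List V) (t : V) : ℝ :=
  ∑ u ∈ Finset.univ.filter (fun u => σ u < σ t), P x u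

/-- Endpoints of the interval `I_{x ++ s}`, given that `I_x = [ab.1, ab.2)`:
starting from prefix `x` with interval endpoints `ab`, process the tokens of `s`
one by one, replacing the current interval `[a, b)` by the child interval
`[a + (b-a)·C_t(x), a + (b-a)·(C_t(x) + P(t|x)))`. -/
noncomputable def endsAux {V : Type*} [Fintype V] (P : List V → V → ℝ) (σ : V → ℕ) :
    List V → List V → ℝ × ℝ → ℝ × ℝ
  | _, [], ab => ab
  | x, t :: r, ab =>
      endsAux P σ (x ++ [t]) r
        (ab.1 + (ab.2 - ab.1) * cdf P σ x t,
         ab.1 + (ab.2 - ab.1) * (cdf P σ x t + P x t))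

/-- Endpoints of the interval `I_s` (starting from `I_{[]} = [0,1)`). -/
noncomputable def ends {V : Type*} [Fintype V] (P : List V → V → ℝ) (σ : V → ℕ)
    (s : List V) : ℝ × ℝ :=
  endsAux P σ [] s ((0 : ℝ), (1 : ℝ))

/-- The half-open interval `I_s ⊆ ℝ`. -/
noncomputable def interval {V : Type*} [Fintype V] (P : List V → V → ℝ) (σ : V → ℕ)
    (s : List V) : Set ℝ :=
  Set.Ico (ends P σ s).1 (ends P σ s).2

section
variable {V : Type*} [Fintype V] (P : List V → V → ℝ) (σ : V → ℕ)

lemma cdf_nonneg (hP0 : ∀ x t, 0 ≤ P x t) (x : List V) (t : V) : 0 ≤ cdf P σ x t :=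
  Finset.sum_nonneg fun u _ => hP0 x u

lemma cdf_add (hσ : Function.Injective σ) (x : List V) (t : V) :
    cdf P σ x t + P x t = ∑ u ∈ Finset.univ.filter (fun u => σ u ≤ σ t), P x u := by
  classical
  have h : Finset.univ.filter (fun u => σ u ≤ σ t)
      = insert t (Finset.univ.filter (fun u => σ u < σ t)) := by
    ext u
    simp only [mem_filter, mem_insert, mem_univ, true_and]
    constructor
    · intro h
      rcases lt_or_eq_of_le h with h | h
      · exact Or.inr h
      · exact Or.inl (hσ h)
    · rintro (rfl | h)
      · exact le_refl _
      · exact le_of_lt h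
  rw [h, Finset.sum_insert (by simp), cdf]
  ring

lemma cdf_add_le_one (hP0 : ∀ x t, 0 ≤ P x t) (hPsum : ∀ x : List V, ∑ t, P x t = 1)
    (hσ : Function.Injective σ) (x : List V) (t : V) :
    cdf P σ x t + P x t ≤ 1 := by
  rw [cdf_add P σ hσ]
  calc ∑ u ∈ Finset.univ.filter (fun u => σ u ≤ σ t), P x u
      ≤ ∑ u, P x u := Finset.sum_le_sum_of_subset_of_nonneg (Finset.filter_subset _ _)
        (fun u _ _ => hP0 x u)
    _ = 1 := hPsum x

lemma cdf_mono (hP0 : ∀ x t, 0 ≤ P x t) (x : List V) {t t' : V} (h : σ t < σ t') :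
    cdf P σ x t ≤ cdf P σ x t' :=
  Finset.sum_le_sum_of_subset_of_nonneg
    (by intro v hv; simp only [mem_filter, mem_univ, true_and] at *; omega)
    (fun u _ _ => hP0 x u)

lemma cdf_add_le (hP0 : ∀ x t, 0 ≤ P x t) (hσ : Function.Injective σ) (x : List V)
    {t t' : V} (h : σ t < σ t') :
    cdf P σ x t + P x t ≤ cdf P σ x t' := by
  rw [cdf_add P σ hσ]
  apply Finset.sum_le_sum_of_subset_of_nonneg
  · intro v hv; simp only [mem_filter, mem_univ, true_and] at *; omega
  · exact fun u _ _ => hP0 x u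

lemma exists_token (hP0 : ∀ x t, 0 ≤ P x t) (hPsum : ∀ x : List V, ∑ t, P x t = 1)
    (hσ : Function.Injective σ) [Nonempty V] (x : List V) {u : ℝ}
    (h0 : 0 ≤ u) (h1 : u < 1) :
    ∃ t, cdf P σ x t ≤ u ∧ u < cdf P σ x t + P x t := by
  have hSne : (Finset.univ.filter (fun t => u < cdf P σ x t + P x t)).Nonempty := by
    obtain ⟨t0, -, ht0⟩ := Finset.exists_max_image Finset.univ σ Finset.univ_nonempty
    refine ⟨t0, ?_⟩
    simp only [mem_filter, mem_univ, true_and]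
    have : cdf P σ x t0 + P x t0 = 1 := by
      rw [cdf_add P σ hσ, ← hPsum x]
      congr 1
      ext v
      simp [ht0 v (Finset.mem_univ v)]
    linarith
  obtain ⟨t, htS, htmin⟩ := Finset.exists_min_image _ σ hSne
  simp only [mem_filter, mem_univ, true_and] at htS
  refine ⟨t, ?_, htS⟩
  by_contra hc
  push_neg at hc
  have hFne : (Finset.univ.filter (fun v => σ v < σ t)).Nonempty := by
    by_contra he
    rw [Finset.not_nonempty_iff_eq_empty] at he
    have : cdf P σ x t = 0 := by rw [cdf, he, Finset.sum_empty]
    linarith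
  obtain ⟨t', ht'F, ht'max⟩ := Finset.exists_max_image _ σ hFne
  simp only [mem_filter, mem_univ, true_and] at ht'F
  have h2 : cdf P σ x t ≤ cdf P σ x t' + P x t' := by
    rw [cdf_add P σ hσ, cdf]
    apply Finset.sum_le_sum_of_subset_of_nonneg
    · intro v hv
      simp only [mem_filter, mem_univ, true_and] at *
      exact ht'max v (by simp [hv])
    · exact fun v _ _ => hP0 x v
  have ht'S : t' ∈ Finset.univ.filter (fun t => u < cdf P σ x t + P x t) := by
    simp only [mem_filter, mem_univ, true_and]; linarith
  have := htmin t' ht'S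
  omega

lemma token_unique (hP0 : ∀ x t, 0 ≤ P x t) (hσ : Function.Injective σ) (x : List V)
    {u : ℝ} {t t' : V}
    (ht : cdf P σ x t ≤ u ∧ u < cdf P σ x t + P x t)
    (ht' : cdf P σ x t' ≤ u ∧ u < cdf P σ x t' + P x t') : t = t' := by
  by_contra hne
  rcases lt_trichotomy (σ t) (σ t') with h | h | h
  · have := cdf_add_le P σ hP0 hσ x h; linarith [ht.2, ht'.1]
  · exact hne (hσ h)
  · have := cdf_add_le P σ hP0 hσ x h; linarith [ht.1, ht'.2]

end


section
variable {V : Type*} [Fintype V] (P : List V → V → ℝ) (σ : V → ℕ)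

lemma endsAux_bounds (hP0 : ∀ x t, 0 ≤ P x t) (hPsum : ∀ x : List V, ∑ t, P x t = 1)
    (hσ : Function.Injective σ) :
    ∀ (s x : List V) (a b : ℝ), a ≤ b →
      a ≤ (endsAux P σ x s (a, b)).1 ∧
      (endsAux P σ x s (a, b)).1 ≤ (endsAux P σ x s (a, b)).2 ∧
      (endsAux P σ x s (a, b)).2 ≤ b := by
  intro s
  induction s with
  | nil => intro x a b hab; simp [endsAux, hab]
  | cons t r IH =>
    intro x a b hab
    have hC0 : 0 ≤ cdf P σ x t := cdf_nonneg P σ hP0 x t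
    have hC1 : cdf P σ x t + P x t ≤ 1 := cdf_add_le_one P σ hP0 hPsum hσ x t
    have hP := hP0 x t
    set c := a + (b - a) * cdf P σ x t with hc
    set d := a + (b - a) * (cdf P σ x t + P x t) with hd
    have hac : a ≤ c := by nlinarith
    have hcd : c ≤ d := by nlinarith
    have hdb : d ≤ b := by nlinarith
    have := IH (x ++ [t]) c d hcd
    rw [show endsAux P σ x (t :: r) (a, b) = endsAux P σ (x ++ [t]) r (c, d) from rfl]
    exact ⟨le_trans hac this.1, this.2.1, le_trans this.2.2 hdb⟩

lemma endsAux_unique [Nonempty V] (hP0 : ∀ x t, 0 ≤ P x t)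
    (hPsum : ∀ x : List V, ∑ t, P x t = 1) (hσ : Function.Injective σ) :
    ∀ (n : ℕ) (x : List V) (a b z : ℝ), z ∈ Set.Ico a b →
      ∃! s : List V, s.length = n ∧
        z ∈ Set.Ico (endsAux P σ x s (a, b)).1 (endsAux P σ x s (a, b)).2 := by
  intro n
  induction n with
  | zero =>
    intro x a b z hz
    refine ⟨[], ⟨rfl, by simpa [endsAux] using hz⟩, ?_⟩
    rintro s ⟨hs, -⟩
    exact List.length_eq_zero_iff.mp hs
  | succ n IH =>
    intro x a b z hz
    obtain ⟨hza, hzb⟩ := hz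
    have hab : a < b := lt_of_le_of_lt hza hzb
    have hba : (0:ℝ) < b - a := by linarith
    -- the normalized point
    set u := (z - a) / (b - a) with hu
    have hu0 : 0 ≤ u := div_nonneg (by linarith) (le_of_lt hba)
    have hu1 : u < 1 := (div_lt_one hba).mpr (by linarith)
    -- membership in a child interval ↔ cdf condition
    have key : ∀ t : V,
        (z ∈ Set.Ico (a + (b - a) * cdf P σ x t) (a + (b - a) * (cdf P σ x t + P x t)))
        ↔ (cdf P σ x t ≤ u ∧ u < cdf P σ x t + P x t) := by
      intro t
      constructor
      · rintro ⟨h1, h2⟩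
        constructor
        · rw [hu, le_div_iff₀ hba]; linarith
        · rw [hu, div_lt_iff₀ hba]; linarith
      · rintro ⟨h1, h2⟩
        rw [hu, le_div_iff₀ hba] at h1
        rw [hu, div_lt_iff₀ hba] at h2
        exact ⟨by linarith, by linarith⟩
    obtain ⟨t, ht⟩ := exists_token P σ hP0 hPsum hσ x hu0 hu1
    have hzt := (key t).mpr ht
    set c := a + (b - a) * cdf P σ x t
    set d := a + (b - a) * (cdf P σ x t + P x t)
    obtain ⟨r, ⟨hrlen, hrz⟩, hruniq⟩ := IH (x ++ [t]) c d z hzt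
    refine ⟨t :: r, ⟨by simp [hrlen], hrz⟩, ?_⟩
    rintro s ⟨hslen, hsz⟩
    match s with
    | t' :: r' =>
      have hstep : endsAux P σ x (t' :: r') (a, b)
          = endsAux P σ (x ++ [t']) r'
              (a + (b - a) * cdf P σ x t', a + (b - a) * (cdf P σ x t' + P x t')) := rfl
      rw [hstep] at hsz
      have hCt'0 : 0 ≤ cdf P σ x t' := cdf_nonneg P σ hP0 x t'
      have hPt' := hP0 x t'
      have hcd' : a + (b - a) * cdf P σ x t' ≤ a + (b - a) * (cdf P σ x t' + P x t') := by
        nlinarith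
      have hb := endsAux_bounds P σ hP0 hPsum hσ r' (x ++ [t']) _ _ hcd'
      have hzt' : z ∈ Set.Ico (a + (b - a) * cdf P σ x t')
          (a + (b - a) * (cdf P σ x t' + P x t')) :=
        ⟨le_trans hb.1 hsz.1, lt_of_lt_of_le hsz.2 hb.2.2⟩
      have htt' : t = t' := token_unique P σ hP0 hσ x ht ((key t').mp hzt')
      subst htt'
      have : r' = r := hruniq r' ⟨by simpa using hslen, hsz⟩
      rw [this]
end


/-- **Decoding correctness.** If the conditional probabilities sum to one
at every prefix, then for every `n` the intervals of the sequences of length `n` are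
pairwise disjoint and their union is `[0,1)`; consequently every `z ∈ [0,1)` lies in the
interval of exactly one sequence of length `n`. -/
theorem decoding_correctness {V : Type*} [Fintype V] [Nonempty V]
    (P : List V → V → ℝ)
    (hP0 : ∀ (x : List V) (t : V), 0 ≤ P x t)
    (hPsum : ∀ x : List V, ∑ t, P x t = 1)
    (σ : V → ℕ) (hσ : Function.Injective σ) (n : ℕ) :
    (∀ s s' : List V, s.length = n → s'.length = n → s ≠ s' →
      interval P σ s ∩ interval P σ s' = ∅) ∧
    (⋃ s ∈ {s : List V | s.length = n}, interval P σ s) = Set.Ico (0 : ℝ) 1 ∧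
    (∀ z ∈ Set.Ico (0 : ℝ) 1, ∃! s : List V, s.length = n ∧ z ∈ interval P σ s) := by
  have hmem : ∀ (s : List V) (z : ℝ), z ∈ interval P σ s ↔
      z ∈ Set.Ico (endsAux P σ [] s ((0:ℝ), (1:ℝ))).1 (endsAux P σ [] s ((0:ℝ), (1:ℝ))).2 := by
    intro s z; rfl
  have huniq : ∀ z ∈ Set.Ico (0:ℝ) 1, ∃! s : List V, s.length = n ∧ z ∈ interval P σ s := by
    intro z hz
    obtain ⟨s, ⟨hs1, hs2⟩, hsu⟩ := endsAux_unique P σ hP0 hPsum hσ n [] 0 1 z hz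
    exact ⟨s, ⟨hs1, (hmem s z).mpr hs2⟩, fun s' ⟨h1, h2⟩ => hsu s' ⟨h1, (hmem s' z).mp h2⟩⟩
  have hsub : ∀ (s : List V) (z : ℝ), z ∈ interval P σ s → z ∈ Set.Ico (0:ℝ) 1 := by
    intro s z hzv
    rw [hmem] at hzv
    have hb := endsAux_bounds P σ hP0 hPsum hσ s [] 0 1 zero_le_one
    exact ⟨le_trans hb.1 hzv.1, lt_of_lt_of_le hzv.2 hb.2.2⟩
  refine ⟨?_, ?_, huniq⟩
  · intro s s' hs hs' hne
    ext z
    simp only [Set.mem_inter_iff, Set.mem_empty_iff_false, iff_false, not_and]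
    intro h1 h2
    obtain ⟨w, hw, hwu⟩ := huniq z (hsub s z h1)
    exact hne ((hwu s ⟨hs, h1⟩).trans (hwu s' ⟨hs', h2⟩).symm)
  · ext z
    simp only [Set.mem_iUnion, Set.mem_setOf_eq, exists_prop]
    constructor
    · rintro ⟨s, hs, hzs⟩
      exact hsub s z hzs
    · intro hz
      obtain ⟨s, ⟨hs, hzs⟩, -⟩ := huniq z hz
      exact ⟨s, hs, hzs⟩
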